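/- Let T = (S, Σ, κ) be a stochastic transition system and B, A ∈ Σ. If there exist k ∈ ℕ and p > 0 such that for every ν ∈ Dist(A), Prob_ν(F^{≤k} B) ≥ p, then for every initial probability distribution μ on (S, Σ), Prob_μ(G (S ∖ B) ∩ GF A) = 0. -/

import Mathlib

/-!
On `G ¬B ∩ GF A` one can pick visits to `A` greedily at times `t₀ < t₁ < ⋯` with
`t_{m+1} > t_m + k`, and `B` is avoided throughout. Each `t_m` is a stopping time, so by the
Markov property at `t_m` the chance of avoiding `B` during the next `k + 1` steps, whatever the
past, is at most `1 - p`. Hence reaching the `m`-th such visit without touching `B` has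
probability at most `(1 - p) ^ m`, which tends to `0`.
-/

open MeasureTheory ProbabilityTheory Filter Set ENNReal

namespace STS

variable {S : Type*} [MeasurableSpace S]

/-- The finite-dimensional distributions of the Markov chain with initial distribution `μ`
and transition kernel `κ`: `finDist κ μ n` is the joint law of the first `n+1` states. -/
noncomputable def finDist (κ : Kernel S S) (μ : Measure S) : (n : ℕ) → Measure (Fin (n + 1) → S)
  | 0 => μ.map (fun s => fun _ => s)
  | n + 1 => (finDist κ μ n).bind (fun x => (κ (x (Fin.last n))).map (Fin.snoc x))

/-- `P` assigns to each initial probability distribution `μ` the probability measure `Prob_μ`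
on the space of runs `ℕ → S` (given by the Ionescu–Tulcea theorem), i.e. the unique probability
measure under which the coordinate process is a Markov chain with initial distribution `μ` and
transition kernel `κ`.  This is characterized by the finite-dimensional distributions. -/
def IsMarkovMeasureFamily (κ : Kernel S S) (P : Measure S → Measure (ℕ → S)) : Prop :=
  ∀ μ : Measure S, IsProbabilityMeasure μ →
    IsProbabilityMeasure (P μ) ∧
    ∀ n : ℕ, (P μ).map (fun ω (i : Fin (n + 1)) => ω i.1) = finDist κ μ n

/-- `F B`: the set of runs that visit `B` at some point. -/
def FEv (B : Set S) : Set (ℕ → S) := {ω | ∃ k, ω k ∈ B}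

/-- `F^{≤n} B`: the set of runs that visit `B` within `n` steps. -/
def FLe (n : ℕ) (B : Set S) : Set (ℕ → S) := {ω | ∃ k ≤ n, ω k ∈ B}

/-- `B' U B`: runs that stay in `B'` until a first visit to `B`. -/
def Until (B' B : Set S) : Set (ℕ → S) := {ω | ∃ k, ω k ∈ B ∧ ∀ j < k, ω j ∈ B'}

/-- `B' U^{≤n} B`: runs that stay in `B'` until a first visit to `B`, within `n` steps. -/
def UntilLe (n : ℕ) (B' B : Set S) : Set (ℕ → S) :=
  {ω | ∃ k ≤ n, ω k ∈ B ∧ ∀ j < k, ω j ∈ B'}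

/-- `G B`: runs that always stay in `B`. -/
def Glob (B : Set S) : Set (ℕ → S) := {ω | ∀ k, ω k ∈ B}

/-- `GF B`: runs that visit `B` infinitely often. -/
def GlobFEv (B : Set S) : Set (ℕ → S) := {ω | ∀ n : ℕ, ∃ k ≥ n, ω k ∈ B}

/-- The avoid-set `B̃` of `B`: states from which `B` is reached with probability `0`. -/
def avoidSet (P : Measure S → Measure (ℕ → S)) (B : Set S) : Set S :=
  {s : S | P (Measure.dirac s) (FEv B) = 0}

/-- The STS is decisive w.r.t. `B`: from any initial distribution, almost surely either `B` or
its avoid-set `B̃` is eventually visited. -/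
def Decisive (P : Measure S → Measure (ℕ → S)) (B : Set S) : Prop :=
  ∀ μ : Measure S, IsProbabilityMeasure μ → P μ (FEv B ∪ FEv (avoidSet P B)) = 1

/-- `A` is an attractor: it is reached almost surely from any initial distribution. -/
def IsAttractor (P : Measure S → Measure (ℕ → S)) (A : Set S) : Prop :=
  ∀ μ : Measure S, IsProbabilityMeasure μ → P μ (FEv A) = 1


section Tuples

variable {α : Type*}

lemma snoc_apply_of_lt {n : ℕ} (x : Fin n → α) (a : α) (j : Fin (n + 1)) (h : (j : ℕ) < n) :
    (Fin.snoc x a : Fin (n + 1) → α) j = x (j.castLT h) := by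
  simp [Fin.snoc, h]

lemma measurable_snoc [MeasurableSpace α] (n : ℕ) :
    Measurable fun q : (Fin n → α) × α => (Fin.snoc q.1 q.2 : Fin (n + 1) → α) := by
  refine measurable_pi_lambda _ fun j => ?_
  induction j using Fin.lastCases with
  | last => simpa only [Fin.snoc_last] using measurable_snd
  | cast i =>
    simp only [Fin.snoc_castSucc]
    fun_prop

lemma measurable_snoc_right [MeasurableSpace α] {n : ℕ} (x : Fin n → α) :
    Measurable fun a : α => (Fin.snoc x a : Fin (n + 1) → α) :=
  (measurable_snoc n).comp measurable_prodMk_left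

def suffixFrom (t n : ℕ) (x : Fin (t + n + 1) → α) : Fin (n + 1) → α :=
  fun j => x ⟨t + j, by omega⟩

@[fun_prop]
lemma measurable_take [MeasurableSpace α] {n : ℕ} (m : ℕ) (h : m ≤ n) :
    Measurable (Fin.take m h : (Fin n → α) → Fin m → α) :=
  measurable_pi_lambda _ fun _ => measurable_pi_apply _

@[fun_prop]
lemma measurable_suffixFrom [MeasurableSpace α] (t n : ℕ) :
    Measurable (suffixFrom (α := α) t n) :=
  measurable_pi_lambda _ fun _ => measurable_pi_apply _

lemma take_snoc (t n : ℕ) (x : Fin (t + n + 1) → α) (a : α) :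
    Fin.take (t + 1) (by omega) (Fin.snoc x a : Fin (t + (n + 1) + 1) → α)
      = Fin.take (t + 1) (by omega) x := by
  funext i
  exact snoc_apply_of_lt x a _ (by simp; omega)

lemma suffixFrom_snoc (t n : ℕ) (x : Fin (t + n + 1) → α) (a : α) :
    suffixFrom t (n + 1) (Fin.snoc x a) = Fin.snoc (suffixFrom t n x) a := by
  funext j
  induction j using Fin.lastCases with
  | last => simp [suffixFrom, Fin.snoc]
  | cast i =>
    rw [Fin.snoc_castSucc]
    exact snoc_apply_of_lt x a _ (by simp; omega)

end Tuples

section FinDist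

variable (κ : Kernel S S) (μ : Measure S)

lemma measurable_map_snoc_kernel [IsSFiniteKernel κ] (n : ℕ) :
    Measurable fun x : Fin (n + 1) → S =>
      ((κ (x (Fin.last n))).map (Fin.snoc x) : Measure (Fin (n + 2) → S)) := by
  refine Measure.measurable_of_measurable_coe _ fun s hs => ?_
  have hmap (x : Fin (n + 1) → S) : ((κ (x (Fin.last n))).map (Fin.snoc x) : Measure _) s
      = κ (x (Fin.last n)) (Prod.mk x ⁻¹' ((fun q => Fin.snoc q.1 q.2) ⁻¹' s)) :=
    Measure.map_apply (measurable_snoc_right x) hs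
  simp only [hmap]
  exact Kernel.measurable_kernel_prodMk_left (κ := κ.comap (fun x => x (Fin.last n))
    (measurable_pi_apply _)) (measurable_snoc _ hs)

lemma lintegral_finDist_zero {G : (Fin 1 → S) → ℝ≥0∞} (hG : Measurable G) :
    ∫⁻ y, G y ∂(finDist κ μ 0) = ∫⁻ s, G (fun _ => s) ∂μ :=
  lintegral_map hG (measurable_pi_lambda _ fun _ => measurable_id)

lemma lintegral_finDist_succ [IsSFiniteKernel κ] (n : ℕ) {G : (Fin (n + 2) → S) → ℝ≥0∞}
    (hG : Measurable G) :
    ∫⁻ y, G y ∂(finDist κ μ (n + 1))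
      = ∫⁻ x, ∫⁻ s, G (Fin.snoc x s) ∂(κ (x (Fin.last n))) ∂(finDist κ μ n) := by
  rw [finDist, Measure.lintegral_bind (measurable_map_snoc_kernel κ n).aemeasurable
    hG.aemeasurable]
  exact lintegral_congr fun x => lintegral_map hG (measurable_snoc_right x)

lemma measurable_lintegral_snoc [IsSFiniteKernel κ] (n : ℕ) {G : (Fin (n + 2) → S) → ℝ≥0∞}
    (hG : Measurable G) :
    Measurable fun z : Fin (n + 1) → S => ∫⁻ s, G (Fin.snoc z s) ∂(κ (z (Fin.last n))) :=
  Measurable.lintegral_kernel_prod_right' (f := fun q => G (Fin.snoc q.1 q.2))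
    (hG.comp (measurable_snoc _))
    (κ := κ.comap (fun z : Fin (n + 1) → S => z (Fin.last n)) (measurable_pi_apply _))

lemma lintegral_finDist_add [IsSFiniteKernel κ] (t n : ℕ) {f : (Fin (t + 1) → S) → ℝ≥0∞}
    {G : (Fin (n + 1) → S) → ℝ≥0∞} (hf : Measurable f) (hG : Measurable G) :
    ∫⁻ x, f (Fin.take (t + 1) (by omega) x) * G (suffixFrom t n x) ∂(finDist κ μ (t + n))
      = ∫⁻ y, f y * ∫⁻ z, G z ∂(finDist κ (Measure.dirac (y (Fin.last t))) n)
          ∂(finDist κ μ t) := by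
  induction n with
  | zero =>
    refine lintegral_congr fun y => ?_
    have hsuffix : suffixFrom t 0 y = fun _ => y (Fin.last t) := by
      funext j
      rw [Fin.fin_one_eq_zero j]
      rfl
    rw [lintegral_finDist_zero κ _ hG, lintegral_dirac' _ (by fun_prop), hsuffix]
    rfl
  | succ n ih =>
    calc ∫⁻ x, f (Fin.take (t + 1) _ x) * G (suffixFrom t (n + 1) x) ∂(finDist κ μ (t + n + 1))
        = ∫⁻ x, f (Fin.take (t + 1) (by omega) x) * ∫⁻ s, G (Fin.snoc (suffixFrom t n x) s)
            ∂(κ (x (Fin.last (t + n)))) ∂(finDist κ μ (t + n)) := by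
          refine (lintegral_finDist_succ κ μ (t + n) (by fun_prop)).trans
            (lintegral_congr fun x => ?_)
          simp only [take_snoc, suffixFrom_snoc]
          exact lintegral_const_mul _ (hG.comp (measurable_snoc_right _))
      _ = ∫⁻ y, f y * ∫⁻ z, ∫⁻ s, G (Fin.snoc z s) ∂(κ (z (Fin.last n)))
            ∂(finDist κ (Measure.dirac (y (Fin.last t))) n) ∂(finDist κ μ t) :=
          ih (measurable_lintegral_snoc κ n hG)
      _ = _ := lintegral_congr fun y => by rw [lintegral_finDist_succ κ _ n hG]

end FinDist

section Paths

variable {α : Type*}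

def firstStates (t : ℕ) (ω : ℕ → α) : Fin (t + 1) → α := fun i => ω i

def padPrefix (t : ℕ) (x : Fin (t + 1) → α) : ℕ → α := fun j => x ⟨min j t, by omega⟩

lemma measurable_firstStates [MeasurableSpace α] (t : ℕ) :
    Measurable (firstStates (α := α) t) :=
  measurable_pi_lambda _ fun _ => measurable_pi_apply _

lemma measurable_padPrefix [MeasurableSpace α] (t : ℕ) : Measurable (padPrefix (α := α) t) :=
  measurable_pi_lambda _ fun _ => measurable_pi_apply _

lemma firstStates_preimage_padPrefix_preimage {t : ℕ} {E : Set (ℕ → α)}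
    (hE : ∀ ω ω', (∀ j ≤ t, ω j = ω' j) → ω ∈ E → ω' ∈ E) :
    firstStates t ⁻¹' (padPrefix t ⁻¹' E) = E := by
  have hpad (ω : ℕ → α) (j : ℕ) (hj : j ≤ t) : padPrefix t (firstStates t ω) j = ω j := by
    simp [padPrefix, firstStates, min_eq_left hj]
  ext ω
  exact ⟨hE _ _ (hpad ω), hE _ _ fun j hj => (hpad ω j hj).symm⟩

end Paths

section PathMeasure

variable {κ : Kernel S S} {P : Measure S → Measure (ℕ → S)}

lemma measure_preimage_firstStates (hP : IsMarkovMeasureFamily κ P) (μ : Measure S)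
    [IsProbabilityMeasure μ] {t : ℕ} {C : Set (Fin (t + 1) → S)} (hC : MeasurableSet C) :
    P μ (firstStates t ⁻¹' C) = finDist κ μ t C := by
  rw [← (hP μ inferInstance).2 t]
  exact (Measure.map_apply (measurable_firstStates t) hC).symm

lemma measure_firstStates_inter_shift_le [IsSFiniteKernel κ] (hP : IsMarkovMeasureFamily κ P)
    (μ : Measure S) [IsProbabilityMeasure μ] {t n : ℕ} {C : Set (Fin (t + 1) → S)}
    {F : Set (Fin (n + 1) → S)} (hC : MeasurableSet C) (hF : MeasurableSet F) {c : ℝ≥0∞}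
    (hc : ∀ y ∈ C, finDist κ (Measure.dirac (y (Fin.last t))) n F ≤ c) :
    P μ (firstStates t ⁻¹' C ∩ {ω | (fun j : Fin (n + 1) => ω (t + j)) ∈ F})
      ≤ c * P μ (firstStates t ⁻¹' C) := by
  set D := Fin.take (t + 1) (by omega) ⁻¹' C ∩ suffixFrom t n ⁻¹' F
  have hD : MeasurableSet D := (measurable_take _ _ hC).inter (measurable_suffixFrom t n hF)
  have hcyl : firstStates t ⁻¹' C ∩ {ω | (fun j : Fin (n + 1) => ω (t + j)) ∈ F}
      = firstStates (t + n) ⁻¹' D := rfl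
  rw [hcyl, measure_preimage_firstStates hP μ hD, measure_preimage_firstStates hP μ hC,
    ← lintegral_indicator_one hD]
  calc ∫⁻ x, D.indicator 1 x ∂(finDist κ μ (t + n))
      = ∫⁻ x, C.indicator 1 (Fin.take (t + 1) (by omega) x) * F.indicator 1 (suffixFrom t n x)
          ∂(finDist κ μ (t + n)) := by
        simp only [D, inter_indicator_one, Pi.mul_apply]
        rfl
    _ = ∫⁻ y, C.indicator 1 y * ∫⁻ z, F.indicator 1 z
          ∂(finDist κ (Measure.dirac (y (Fin.last t))) n) ∂(finDist κ μ t) :=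
        lintegral_finDist_add κ μ t n (measurable_one.indicator hC) (measurable_one.indicator hF)
    _ ≤ ∫⁻ y, C.indicator 1 y * c ∂(finDist κ μ t) := by
        refine lintegral_mono fun y => ?_
        by_cases hy : y ∈ C
        · simpa [hy, lintegral_indicator_one hF] using hc y hy
        · simp [hy]
    _ = c * finDist κ μ t C := by
        rw [lintegral_mul_const _ (measurable_one.indicator hC), lintegral_indicator_one hC,
          mul_comm]

lemma measurableSet_FLe {B : Set S} (hB : MeasurableSet B) (k : ℕ) :
    MeasurableSet (FLe k B) :=
  measurableSet_setOfPred.2 (by fun_prop)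

lemma finDist_dirac_avoid_le (hP : IsMarkovMeasureFamily κ P) {A B : Set S}
    (hB : MeasurableSet B) {k : ℕ} {p : ℝ≥0∞}
    (hreach : ∀ s ∈ A, p ≤ P (Measure.dirac s) (FLe k B)) {s : S} (hs : s ∈ A) :
    finDist κ (Measure.dirac s) k {z | ∀ i, z i ∉ B} ≤ 1 - p := by
  have hF : MeasurableSet {z : Fin (k + 1) → S | ∀ i, z i ∉ B} :=
    measurableSet_setOfPred.2 (by fun_prop)
  have hcompl : firstStates k ⁻¹' {z | ∀ i, z i ∉ B} = (FLe k B)ᶜ := by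
    ext ω
    simp only [FLe, firstStates, mem_preimage, mem_ofPred_eq, mem_compl_iff, not_exists, not_and]
    exact ⟨fun h j hj => h ⟨j, by omega⟩, fun h i => h i (by omega)⟩
  have := (hP (Measure.dirac s) inferInstance).1
  rw [← measure_preimage_firstStates hP _ hF, hcompl,
    prob_compl_eq_one_sub (measurableSet_FLe hB k)]
  exact tsub_le_tsub_left (hreach s hs) 1

lemma measure_inter_avoid_le [IsSFiniteKernel κ] (hP : IsMarkovMeasureFamily κ P)
    (μ : Measure S) [IsProbabilityMeasure μ] {A B : Set S} (hB : MeasurableSet B) {k : ℕ}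
    {p : ℝ≥0∞} (hreach : ∀ s ∈ A, p ≤ P (Measure.dirac s) (FLe k B)) {t : ℕ} {E : Set (ℕ → S)}
    (hE : MeasurableSet E) (hEt : ∀ ω ω', (∀ j ≤ t, ω j = ω' j) → ω ∈ E → ω' ∈ E)
    (hEA : ∀ ω ∈ E, ω t ∈ A) :
    P μ (E ∩ {ω | ∀ j ≤ k, ω (t + j) ∉ B}) ≤ (1 - p) * P μ E := by
  have hshift : {ω : ℕ → S | ∀ j ≤ k, ω (t + j) ∉ B}
      = {ω | (fun j : Fin (k + 1) => ω (t + j)) ∈ {z | ∀ i, z i ∉ B}} := by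
    ext ω
    exact ⟨fun h i => h i (by omega), fun h j hj => h ⟨j, by omega⟩⟩
  rw [← firstStates_preimage_padPrefix_preimage hEt, hshift]
  refine measure_firstStates_inter_shift_le hP μ (measurable_padPrefix t hE)
    (measurableSet_setOfPred.2 (by fun_prop)) fun y hy => finDist_dirac_avoid_le hP hB hreach ?_
  have hyA := hEA _ hy
  simp only [padPrefix, min_self] at hyA
  exact hyA

end PathMeasure

section SpacedVisits

variable {α : Type*} {A : Set α} {k n t t₁ t₂ : ℕ} {ω ω' : ℕ → α}

def IsFirstVisitFrom (A : Set α) (n t : ℕ) (ω : ℕ → α) : Prop :=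
  n ≤ t ∧ ω t ∈ A ∧ ∀ j, n ≤ j → j < t → ω j ∉ A

lemma IsFirstVisitFrom.unique (h₁ : IsFirstVisitFrom A n t₁ ω) (h₂ : IsFirstVisitFrom A n t₂ ω) :
    t₁ = t₂ := by
  rcases lt_trichotomy t₁ t₂ with h | h | h
  · exact absurd h₁.2.1 (h₂.2.2 t₁ h₁.1 h)
  · exact h
  · exact absurd h₂.2.1 (h₁.2.2 t₂ h₂.1 h)

lemma IsFirstVisitFrom.congr (h : IsFirstVisitFrom A n t ω) (hω : ∀ j ≤ t, ω j = ω' j) :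
    IsFirstVisitFrom A n t ω' :=
  ⟨h.1, hω t le_rfl ▸ h.2.1, fun j hnj hjt => hω j hjt.le ▸ h.2.2 j hnj hjt⟩

lemma exists_isFirstVisitFrom (hω : ω ∈ GlobFEv A) (n : ℕ) : ∃ t, IsFirstVisitFrom A n t ω := by
  classical
  have hex : ∃ t, n ≤ t ∧ ω t ∈ A := hω n
  exact ⟨Nat.find hex, (Nat.find_spec hex).1, (Nat.find_spec hex).2,
    fun j hnj hjt hjA => Nat.find_min hex hjt ⟨hnj, hjA⟩⟩

lemma measurable_isFirstVisitFrom [MeasurableSpace α] (hA : MeasurableSet A) (n t : ℕ) :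
    Measurable (IsFirstVisitFrom A n t) := by
  unfold IsFirstVisitFrom
  fun_prop

/-- `t` is the time of the `m`-th visit (counting from `0`) to `A` in the greedy sequence of
visits in which each one is the first more than `k` steps after the previous one. -/
def IsSpacedVisit (A : Set α) (k : ℕ) : ℕ → ℕ → (ℕ → α) → Prop
  | 0, t, ω => IsFirstVisitFrom A 0 t ω
  | m + 1, t, ω => ∃ t', IsSpacedVisit A k m t' ω ∧ IsFirstVisitFrom A (t' + k + 1) t ω

lemma IsSpacedVisit.mem : ∀ {m}, IsSpacedVisit A k m t ω → ω t ∈ A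
  | 0, h => h.2.1
  | _ + 1, ⟨_, _, h⟩ => h.2.1

lemma IsSpacedVisit.unique {m : ℕ} (h₁ : IsSpacedVisit A k m t₁ ω)
    (h₂ : IsSpacedVisit A k m t₂ ω) : t₁ = t₂ := by
  induction m generalizing t₁ t₂ with
  | zero => exact IsFirstVisitFrom.unique h₁ h₂
  | succ m ih =>
    obtain ⟨s, h₁', h₁⟩ := h₁
    obtain ⟨s', h₂', h₂⟩ := h₂
    obtain rfl := ih h₁' h₂'
    exact h₁.unique h₂

lemma IsSpacedVisit.congr : ∀ {m t}, IsSpacedVisit A k m t ω → (∀ j ≤ t, ω j = ω' j) →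
    IsSpacedVisit A k m t ω'
  | 0, _, h, hω => IsFirstVisitFrom.congr h hω
  | _ + 1, _, ⟨t', h', h⟩, hω =>
    ⟨t', h'.congr fun j hj => hω j (by have := h.1; omega), h.congr hω⟩

lemma exists_isSpacedVisit (hω : ω ∈ GlobFEv A) : ∀ m, ∃ t, IsSpacedVisit A k m t ω
  | 0 => exists_isFirstVisitFrom hω 0
  | m + 1 => by
    obtain ⟨t', h'⟩ := exists_isSpacedVisit hω m
    obtain ⟨t, h⟩ := exists_isFirstVisitFrom hω (t' + k + 1)
    exact ⟨t, t', h', h⟩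

lemma measurable_isSpacedVisit [MeasurableSpace α] (hA : MeasurableSet A) :
    ∀ m t, Measurable (IsSpacedVisit A k m t)
  | 0, t => measurable_isFirstVisitFrom hA 0 t
  | m + 1, t => Measurable.exists fun t' =>
    (measurable_isSpacedVisit hA m t').and (measurable_isFirstVisitFrom hA _ t)

def spacedVisitAvoiding (A B : Set α) (k m t : ℕ) : Set (ℕ → α) :=
  {ω | IsSpacedVisit A k m t ω ∧ ∀ j ≤ t, ω j ∉ B}

lemma measurableSet_spacedVisitAvoiding [MeasurableSpace α] (hA : MeasurableSet A) {B : Set α}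
    (hB : MeasurableSet B) (m t : ℕ) : MeasurableSet (spacedVisitAvoiding A B k m t) := by
  have := measurable_isSpacedVisit (k := k) hA m t
  exact measurableSet_setOfPred.2 (by fun_prop)

lemma pairwise_disjoint_spacedVisitAvoiding (A B : Set α) (k m : ℕ) :
    Pairwise (Function.onFun Disjoint (spacedVisitAvoiding A B k m)) :=
  fun _ _ hne => disjoint_left.2 fun _ h₁ h₂ => hne (h₁.1.unique h₂.1)

lemma glob_inter_globFEv_subset_iUnion_spacedVisitAvoiding (A B : Set α) (k m : ℕ) :
    Glob Bᶜ ∩ GlobFEv A ⊆ ⋃ t, spacedVisitAvoiding A B k m t := fun _ ⟨hB, hA⟩ =>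
  let ⟨t, ht⟩ := exists_isSpacedVisit hA m
  mem_iUnion.2 ⟨t, ht, fun j _ => hB j⟩

lemma iUnion_spacedVisitAvoiding_succ_subset (A B : Set α) (k m : ℕ) :
    ⋃ t, spacedVisitAvoiding A B k (m + 1) t
      ⊆ ⋃ t, spacedVisitAvoiding A B k m t ∩ {ω | ∀ j ≤ k, ω (t + j) ∉ B} := by
  simp only [iUnion_subset_iff]
  rintro t ω ⟨⟨t', h', ht⟩, hB⟩
  have : t' + k < t := ht.1
  exact mem_iUnion.2 ⟨t', ⟨h', fun j hj => hB j (by omega)⟩, fun j hj => hB _ (by omega)⟩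

end SpacedVisits

section Decay

variable {κ : Kernel S S} [IsSFiniteKernel κ] {P : Measure S → Measure (ℕ → S)}
  {A B : Set S} {k : ℕ} {p : ℝ≥0∞}

lemma measure_iUnion_spacedVisitAvoiding_le_pow (hP : IsMarkovMeasureFamily κ P)
    (μ : Measure S) [IsProbabilityMeasure μ] (hA : MeasurableSet A) (hB : MeasurableSet B)
    (hreach : ∀ s ∈ A, p ≤ P (Measure.dirac s) (FLe k B)) :
    ∀ m, P μ (⋃ t, spacedVisitAvoiding A B k m t) ≤ (1 - p) ^ m
  | 0 => by
    have := (hP μ inferInstance).1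
    simpa using prob_le_one
  | m + 1 => by
    have hE := measurableSet_spacedVisitAvoiding (k := k) hA hB m
    calc P μ (⋃ t, spacedVisitAvoiding A B k (m + 1) t)
        ≤ ∑' t, P μ (spacedVisitAvoiding A B k m t ∩ {ω | ∀ j ≤ k, ω (t + j) ∉ B}) :=
          (measure_mono (iUnion_spacedVisitAvoiding_succ_subset A B k m)).trans
            (measure_iUnion_le _)
      _ ≤ ∑' t, (1 - p) * P μ (spacedVisitAvoiding A B k m t) :=
          ENNReal.tsum_le_tsum fun t => measure_inter_avoid_le hP μ hB hreach (hE t)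
            (fun _ _ hω h => ⟨h.1.congr hω, fun j hj => hω j hj ▸ h.2 j hj⟩) fun _ h => h.1.mem
      _ = (1 - p) * P μ (⋃ t, spacedVisitAvoiding A B k m t) := by
          rw [ENNReal.tsum_mul_left,
            measure_iUnion (pairwise_disjoint_spacedVisitAvoiding A B k m) hE]
      _ ≤ (1 - p) ^ (m + 1) := by
          rw [pow_succ']
          gcongr
          exact measure_iUnion_spacedVisitAvoiding_le_pow hP μ hA hB hreach m

end Decay

/-- bounded-horizon version of the key lemma. If there are `k ∈ ℕ` and
`p > 0` such that from every distribution concentrated on `A` the probability of reaching `B`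
within `k` steps is at least `p`, then the set of runs that never visit `B` yet visit `A`
infinitely often is null. -/
theorem never_B_and_infinitely_often_A_null_of_boundedHorizon
    (κ : Kernel S S) [IsMarkovKernel κ]
    (P : Measure S → Measure (ℕ → S)) (hP : IsMarkovMeasureFamily κ P)
    (B A : Set S) (hB : MeasurableSet B) (hA : MeasurableSet A)
    (k : ℕ) (p : ℝ≥0∞) (hp : 0 < p)
    (hreach : ∀ ν : Measure S, IsProbabilityMeasure ν → ν A = 1 → p ≤ P ν (FLe k B))
    (μ : Measure S) (hμ : IsProbabilityMeasure μ) :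
    P μ (Glob Bᶜ ∩ GlobFEv A) = 0 := by
  have hreach_dirac : ∀ s ∈ A, p ≤ P (Measure.dirac s) (FLe k B) :=
    fun s hs => hreach _ inferInstance (Measure.dirac_apply_of_mem hs)
  have hle_pow (m : ℕ) : P μ (Glob Bᶜ ∩ GlobFEv A) ≤ (1 - p) ^ m :=
    (measure_mono (glob_inter_globFEv_subset_iUnion_spacedVisitAvoiding A B k m)).trans
      (measure_iUnion_spacedVisitAvoiding_le_pow hP μ hA hB hreach_dirac m)
  have hpow : Tendsto (fun m => (1 - p) ^ m) atTop (nhds 0) :=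
    ENNReal.tendsto_pow_atTop_nhds_zero_of_lt_one
      (ENNReal.sub_lt_self one_ne_top one_ne_zero hp.ne')
  exact nonpos_iff_eq_zero.1 (ge_of_tendsto' hpow hle_pow)

end STS
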